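/- Let V : ℕ → ℝ be a sequence of nonnegative reals, γ : ℕ → ℝ a nonnegative sequence with ∑ γ k < ∞, and W : ℕ → ℝ a nonnegative sequence such that V (k+1) - V k ≤ γ k - W k for all k. Then (i) the sequence V k converges to a finite limit, and (ii) ∑_{k=0}^{∞} W k < ∞, so in particular liminf W k = 0. -/

import Mathlib

/-!
The sequence `V n + ∑_{i<n} (W i - γ i)` is nonincreasing. Comparing it with its initial value
`V 0` bounds the partial sums of the nonnegative `W` by `V 0` plus a bound on the partial sums of
`γ`, so `W` is summable. The nonincreasing sequence is then bounded below by the convergent partial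
sums of `W - γ`, hence converges, and so does `V`, its difference with those partial sums.
-/

open Filter Finset

section

variable {V γ W : ℕ → ℝ}

lemma antitone_add_sum_range_sub (hdiff : ∀ k, V (k + 1) - V k ≤ γ k - W k) :
    Antitone fun n => V n + ∑ i ∈ range n, (W i - γ i) := by
  refine antitone_nat_of_succ_le fun n => ?_
  rw [sum_range_succ]
  linarith [hdiff n]

lemma summable_of_succ_sub_le_sub (hVnn : ∀ k, 0 ≤ V k) (hWnn : ∀ k, 0 ≤ W k)
    (hγsum : Summable γ) (hdiff : ∀ k, V (k + 1) - V k ≤ γ k - W k) : Summable W := by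
  obtain ⟨B, hB⟩ := hγsum.hasSum.tendsto_sum_nat.bddAbove_range
  refine summable_of_sum_range_le hWnn (c := V 0 + B) fun n => ?_
  have hle : V n + ∑ i ∈ range n, (W i - γ i) ≤ V 0 := by
    simpa using antitone_add_sum_range_sub hdiff (Nat.zero_le n)
  rw [sum_sub_distrib] at hle
  linarith [hVnn n, hB ⟨n, rfl⟩]

lemma exists_tendsto_of_succ_sub_le_sub (hVnn : ∀ k, 0 ≤ V k) (hWsum : Summable W)
    (hγsum : Summable γ) (hdiff : ∀ k, V (k + 1) - V k ≤ γ k - W k) :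
    ∃ L, Tendsto V atTop (nhds L) := by
  have hS : Tendsto (fun n => ∑ i ∈ range n, (W i - γ i)) atTop (nhds (∑' i, (W i - γ i))) :=
    (hWsum.sub hγsum).hasSum.tendsto_sum_nat
  obtain ⟨b, hb⟩ := hS.bddBelow_range
  have hbdd : BddBelow (Set.range fun n => V n + ∑ i ∈ range n, (W i - γ i)) := by
    refine ⟨b, ?_⟩
    rintro _ ⟨n, rfl⟩
    linarith [hVnn n, hb ⟨n, rfl⟩]
  exact ⟨_, by simpa using (tendsto_atTop_ciInf (antitone_add_sum_range_sub hdiff) hbdd).sub hS⟩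

end

theorem stmt_1_general (V γ W : ℕ → ℝ)
    (hVnn : ∀ k, 0 ≤ V k) (hWnn : ∀ k, 0 ≤ W k)
    (hγsum : Summable γ)
    (hdiff : ∀ k, V (k + 1) - V k ≤ γ k - W k) :
    (∃ L : ℝ, Tendsto V atTop (nhds L)) ∧ Summable W ∧
      liminf W atTop = 0 := by
  have hWsum := summable_of_succ_sub_le_sub hVnn hWnn hγsum hdiff
  exact ⟨exists_tendsto_of_succ_sub_le_sub hVnn hWsum hγsum hdiff, hWsum,
    hWsum.tendsto_atTop_zero.liminf_eq⟩

theorem stmt_1 (V γ W : ℕ → ℝ)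
    (hVnn : ∀ k, 0 ≤ V k) (hγnn : ∀ k, 0 ≤ γ k) (hWnn : ∀ k, 0 ≤ W k)
    (hγsum : Summable γ)
    (hdiff : ∀ k, V (k + 1) - V k ≤ γ k - W k) :
    (∃ L : ℝ, Tendsto V atTop (nhds L)) ∧ Summable W ∧
      liminf W atTop = 0 :=
  stmt_1_general V γ W hVnn hWnn hγsum hdiff
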